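/- For all p⁺, p⁻ ∈ ℝ, the quadratic Casimir operator (1/2)(ρ(J⁺)ρ(J⁻) + ρ(J⁻)ρ(J⁺)) + ρ(J)ρ(T) + ρ(T)ρ(J) acts on V₊^{p⁺,p⁻} as the scalar −2p⁺(p⁻ + 1/2) times the identity. -/
import Mathlib


/-!
For `p⁺, p⁻ ∈ ℝ`, `V₊^{p⁺,p⁻}` is the complex vector space with basis
`{|r⟩ : r ∈ ℕ}` (modelled as `ℕ →₀ ℂ`, `|r⟩ = single r 1`) with operators
`ρ(T)|r⟩ = ip⁺|r⟩`, `ρ(J)|r⟩ = i(p⁻ − r)|r⟩`, `ρ(J⁻)|r⟩ = i|r+1⟩`,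
`ρ(J⁺)|r⟩ = 2ip⁺r|r−1⟩` (so `ρ(J⁺)|0⟩ = 0`).
-/

/-- The basis vector `|r⟩` of `V₊^{p⁺,p⁻}`. -/
noncomputable def ket (r : ℕ) : ℕ →₀ ℂ := Finsupp.single r 1

/-- Linear extension of a map defined on the basis `{|r⟩}`. -/
noncomputable def opOf (g : ℕ → (ℕ →₀ ℂ)) : (ℕ →₀ ℂ) →ₗ[ℂ] (ℕ →₀ ℂ) :=
  Finsupp.lsum ℂ fun r => LinearMap.toSpanSingleton ℂ (ℕ →₀ ℂ) (g r)

/-- `ρ(T)`. -/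
noncomputable def rhoT (pp : ℝ) : (ℕ →₀ ℂ) →ₗ[ℂ] (ℕ →₀ ℂ) :=
  opOf fun r => (Complex.I * (pp : ℂ)) • ket r

/-- `ρ(J)`. -/
noncomputable def rhoJ (pm : ℝ) : (ℕ →₀ ℂ) →ₗ[ℂ] (ℕ →₀ ℂ) :=
  opOf fun r => (Complex.I * ((pm : ℂ) - (r : ℂ))) • ket r

/-- `ρ(J⁻)`. -/
noncomputable def rhoJminus : (ℕ →₀ ℂ) →ₗ[ℂ] (ℕ →₀ ℂ) :=
  opOf fun r => Complex.I • ket (r + 1)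

/-- `ρ(J⁺)`. -/
noncomputable def rhoJplus (pp : ℝ) : (ℕ →₀ ℂ) →ₗ[ℂ] (ℕ →₀ ℂ) :=
  opOf fun r => (2 * Complex.I * (pp : ℂ) * (r : ℂ)) • ket (r - 1)


lemma opOf_single (g : ℕ → (ℕ →₀ ℂ)) (r : ℕ) (c : ℂ) :
    opOf g (Finsupp.single r c) = c • g r := by
  simp [opOf, LinearMap.toSpanSingleton_apply]
/-- The quadratic Casimir operator
`(1/2)(ρ(J⁺)ρ(J⁻) + ρ(J⁻)ρ(J⁺)) + ρ(J)ρ(T) + ρ(T)ρ(J)` acts on `V₊^{p⁺,p⁻}` as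
the scalar `−2p⁺(p⁻ + 1/2)` times the identity. -/
theorem Vplus_casimir (pp pm : ℝ) :
    (1 / 2 : ℂ) • (rhoJplus pp ∘ₗ rhoJminus + rhoJminus ∘ₗ rhoJplus pp)
      + rhoJ pm ∘ₗ rhoT pp + rhoT pp ∘ₗ rhoJ pm
    = ((-2 * pp * (pm + 1 / 2) : ℝ) : ℂ) • (LinearMap.id : (ℕ →₀ ℂ) →ₗ[ℂ] (ℕ →₀ ℂ)) := by
  apply Finsupp.lhom_ext
  intro r b
  simp only [LinearMap.add_apply, LinearMap.comp_apply, LinearMap.smul_apply,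
    LinearMap.id_apply, rhoJplus, rhoJminus, rhoJ, rhoT, ket, opOf_single,
    Finsupp.smul_single, smul_eq_mul, mul_one]
  cases r with
  | zero =>
    simp only [opOf_single, Nat.cast_zero, mul_zero, zero_mul, zero_smul, smul_zero, ket,
      Finsupp.smul_single, smul_eq_mul, mul_one, Nat.add_sub_cancel, add_zero, sub_zero,
      Nat.sub_self, Finsupp.single_zero, zero_add, smul_add,
      ← Finsupp.single_add]
    congr 1
    push_cast
    ring_nf
    simp only [Complex.I_sq]
    ring
  | succ n =>
    simp only [opOf_single, ket, Finsupp.smul_single, smul_eq_mul, mul_one,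
      Nat.add_sub_cancel, Nat.cast_add, Nat.cast_one, smul_add, ← Finsupp.single_add]
    congr 1
    push_cast
    ring_nf
    simp only [Complex.I_sq]
    ring
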